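/- arXiv:2605.02896 — 4 statements merged into one kernel-verified Lean document; each statement's English description precedes it below -/
import Mathlib

section
/- Let Z be a real symmetric n×n matrix and let 𝓛(Z) be the (n+1)×(n+1) matrix whose upper-left n×n block equals Z, whose (i,n+1) and (n+1,i) entries equal Z_{ii} for 1 ≤ i ≤ n, and whose (n+1,n+1) entry equals 1. Then Z belongs to the correlation polytope COR(n) if and only if 𝓛(Z) belongs to the correlation cone CONX(n+1). -/
open Matrix BigOperators

/-- The real vector associated to a boolean vector. -/
def boolVec {n : ℕ} (s : Fin n → Bool) : Fin n → ℝ := fun i => if s i then 1 else 0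

/-- The rank-one matrix `x xᵀ`. -/
def rankOne {n : ℕ} (x : Fin n → ℝ) : Matrix (Fin n) (Fin n) ℝ :=
  Matrix.of fun i j => x i * x j

/-- Membership in the correlation cone `CONX(n)`. -/
def memCONX {n : ℕ} (Γ : Matrix (Fin n) (Fin n) ℝ) : Prop :=
  ∃ p : (Fin n → Bool) → ℝ, (∀ s, 0 ≤ p s) ∧
    Γ = ∑ s : Fin n → Bool, p s • rankOne (boolVec s)

/-- Membership in the correlation polytope `COR(n)`. -/
def memCOR {n : ℕ} (Γ : Matrix (Fin n) (Fin n) ℝ) : Prop :=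
  ∃ p : (Fin n → Bool) → ℝ, (∀ s, 0 ≤ p s) ∧ (∑ s : Fin n → Bool, p s) = 1 ∧
    Γ = ∑ s : Fin n → Bool, p s • rankOne (boolVec s)

/-- The lifting map `𝓛`: the `(n+1)×(n+1)` matrix with upper-left block `Z`, last row
and column equal to the diagonal of `Z`, and last entry `1`. -/
def Lmap {n : ℕ} (Z : Matrix (Fin n) (Fin n) ℝ) : Matrix (Fin (n+1)) (Fin (n+1)) ℝ :=
  Matrix.of fun i j =>
    if hi : (i : ℕ) < n then
      if hj : (j : ℕ) < n then Z ⟨i, hi⟩ ⟨j, hj⟩ else Z ⟨i, hi⟩ ⟨i, hi⟩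
    else if hj : (j : ℕ) < n then Z ⟨j, hj⟩ ⟨j, hj⟩ else 1

lemma boolVec_nonneg {n : ℕ} (s : Fin n → Bool) (i : Fin n) : 0 ≤ boolVec s i := by
  by_cases h : s i <;> simp [boolVec, h]

lemma boolVec_le_one {n : ℕ} (s : Fin n → Bool) (i : Fin n) : boolVec s i ≤ 1 := by
  by_cases h : s i <;> simp [boolVec, h]

lemma boolVec_sq {n : ℕ} (s : Fin n → Bool) (i : Fin n) :
    boolVec s i * boolVec s i = boolVec s i := by
  by_cases h : s i <;> simp [boolVec, h]

lemma boolVec_snoc_castSucc {n : ℕ} (s : Fin n → Bool) (b : Bool) (i : Fin n) :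
    boolVec (Fin.snoc s b) i.castSucc = boolVec s i := by
  simp [boolVec, Fin.snoc_castSucc]

lemma boolVec_snoc_last {n : ℕ} (s : Fin n → Bool) (b : Bool) :
    boolVec (Fin.snoc s b) (Fin.last n) = if b then 1 else 0 := by
  simp [boolVec]

def snocEquivBool (n : ℕ) : (Fin n → Bool) × Bool ≃ (Fin (n+1) → Bool) where
  toFun x := Fin.snoc x.1 x.2
  invFun t := (fun i => t i.castSucc, t (Fin.last n))
  left_inv x := by
    refine Prod.ext ?_ ?_
    · funext i; simp
    · simp
  right_inv t := by
    funext i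
    refine Fin.lastCases ?_ ?_ i <;> simp

lemma sum_snoc {n : ℕ} (f : (Fin (n+1) → Bool) → ℝ) :
    ∑ t, f t = ∑ s : Fin n → Bool, (f (Fin.snoc s true) + f (Fin.snoc s false)) := by
  rw [← Equiv.sum_comp (snocEquivBool n) f, Fintype.sum_prod_type]
  simp [snocEquivBool, Fintype.sum_bool]

lemma conx_apply {n : ℕ} (q : (Fin n → Bool) → ℝ) (i j : Fin n) :
    (∑ s : Fin n → Bool, q s • rankOne (boolVec s)) i j
      = ∑ s : Fin n → Bool, q s * (boolVec s i * boolVec s j) := by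
  simp [Matrix.sum_apply, rankOne, mul_assoc]

lemma Lmap_cc {n : ℕ} (Z : Matrix (Fin n) (Fin n) ℝ) (i j : Fin n) :
    Lmap Z i.castSucc j.castSucc = Z i j := by
  simp [Lmap, i.isLt, j.isLt]

lemma Lmap_cl {n : ℕ} (Z : Matrix (Fin n) (Fin n) ℝ) (i : Fin n) :
    Lmap Z i.castSucc (Fin.last n) = Z i i := by
  simp [Lmap, i.isLt]

lemma Lmap_lc {n : ℕ} (Z : Matrix (Fin n) (Fin n) ℝ) (j : Fin n) :
    Lmap Z (Fin.last n) j.castSucc = Z j j := by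
  simp [Lmap, j.isLt]

lemma Lmap_ll {n : ℕ} (Z : Matrix (Fin n) (Fin n) ℝ) :
    Lmap Z (Fin.last n) (Fin.last n) = 1 := by
  simp [Lmap]

theorem memCOR_iff_Lmap_memCONX' {n : ℕ} (Z : Matrix (Fin n) (Fin n) ℝ) (hZ : Z.IsSymm) :
    (∃ p : (Fin n → Bool) → ℝ, (∀ s, 0 ≤ p s) ∧ (∑ s : Fin n → Bool, p s) = 1 ∧
      Z = ∑ s : Fin n → Bool, p s • rankOne (boolVec s)) ↔
    (∃ p : (Fin (n+1) → Bool) → ℝ, (∀ s, 0 ≤ p s) ∧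
      Lmap Z = ∑ s : Fin (n+1) → Bool, p s • rankOne (boolVec s)) := by
  constructor
  · rintro ⟨p, hp, hsum, hZeq⟩
    have hZab : ∀ a b : Fin n, Z a b = ∑ s : Fin n → Bool, p s * (boolVec s a * boolVec s b) := by
      intro a b; rw [hZeq, conx_apply]
    refine ⟨fun t => if t (Fin.last n) then p (fun i => t i.castSucc) else 0, ?_, ?_⟩
    · intro t
      dsimp only
      split
      · exact hp _
      · exact le_rfl
    · ext i j
      rw [conx_apply, sum_snoc]
      have hred : ∀ i' j' : Fin (n+1),
          (∑ s : Fin n → Bool,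
            ((if (Fin.snoc s true : Fin (n+1) → Bool) (Fin.last n) then p (fun i => (Fin.snoc s true : Fin (n+1) → Bool) i.castSucc) else 0) * (boolVec (Fin.snoc s true) i' * boolVec (Fin.snoc s true) j') +
             (if (Fin.snoc s false : Fin (n+1) → Bool) (Fin.last n) then p (fun i => (Fin.snoc s false : Fin (n+1) → Bool) i.castSucc) else 0) * (boolVec (Fin.snoc s false) i' * boolVec (Fin.snoc s false) j')))
          = ∑ s : Fin n → Bool, p s * (boolVec (Fin.snoc s true) i' * boolVec (Fin.snoc s true) j') := by
        intro i' j'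
        refine Finset.sum_congr rfl fun s _ => ?_
        simp [Fin.snoc_last, Fin.snoc_castSucc]
      rw [hred]
      refine Fin.lastCases ?_ ?_ i <;> [skip; intro a] <;> refine Fin.lastCases ?_ ?_ j
      · simp only [Lmap_ll, boolVec_snoc_last, if_true]
        simpa using hsum.symm
      · intro b
        simp only [Lmap_lc, boolVec_snoc_last, boolVec_snoc_castSucc, if_true, one_mul]
        rw [hZab b b]
        refine Finset.sum_congr rfl fun s _ => ?_
        rw [boolVec_sq]
      · simp only [Lmap_cl, boolVec_snoc_last, boolVec_snoc_castSucc, if_true, mul_one]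
        rw [hZab a a]
        refine Finset.sum_congr rfl fun s _ => ?_
        rw [boolVec_sq]
      · intro b
        simp only [Lmap_cc, boolVec_snoc_castSucc]
        exact hZab a b
  · rintro ⟨q, hq, hqZ⟩
    have key : ∀ i j : Fin (n+1), Lmap Z i j = ∑ t : Fin (n+1) → Bool, q t * (boolVec t i * boolVec t j) := by
      intro i j; rw [hqZ, conx_apply]
    -- terms with last coordinate false vanish (when multiplied by any boolVec coordinate)
    have hvanish : ∀ (i : Fin n) (t : Fin (n+1) → Bool), t (Fin.last n) = false →
        q t * boolVec t i.castSucc = 0 := by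
      intro i
      have hS : ∑ t : Fin (n+1) → Bool, q t * (boolVec t i.castSucc * (1 - boolVec t (Fin.last n))) = 0 := by
        have e1 := key i.castSucc i.castSucc
        have e2 := key i.castSucc (Fin.last n)
        rw [Lmap_cc] at e1
        rw [Lmap_cl] at e2
        have : ∑ t : Fin (n+1) → Bool, q t * (boolVec t i.castSucc * (1 - boolVec t (Fin.last n)))
            = (∑ t : Fin (n+1) → Bool, q t * (boolVec t i.castSucc * boolVec t i.castSucc))
              - ∑ t : Fin (n+1) → Bool, q t * (boolVec t i.castSucc * boolVec t (Fin.last n)) := by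
          rw [← Finset.sum_sub_distrib]
          refine Finset.sum_congr rfl fun t _ => ?_
          rw [boolVec_sq]; ring
        rw [this, ← e1, ← e2, sub_self]
      have hnn : ∀ t ∈ Finset.univ, (0:ℝ) ≤ q t * (boolVec t i.castSucc * (1 - boolVec t (Fin.last n))) := by
        intro t _
        have h1 := boolVec_le_one t (Fin.last n)
        exact mul_nonneg (hq t) (mul_nonneg (boolVec_nonneg _ _) (by linarith))
      intro t ht
      have := (Finset.sum_eq_zero_iff_of_nonneg hnn).mp hS t (Finset.mem_univ t)
      rw [show boolVec t (Fin.last n) = 0 by simp [boolVec, ht]] at this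
      simpa using this
    refine ⟨fun s => q (Fin.snoc s true), fun s => hq _, ?_, ?_⟩
    · have := key (Fin.last n) (Fin.last n)
      rw [Lmap_ll] at this
      rw [sum_snoc (fun t => q t * (boolVec t (Fin.last n) * boolVec t (Fin.last n)))] at this
      have h2 : ∑ s : Fin n → Bool,
          (q (Fin.snoc s true) * (boolVec (Fin.snoc s true) (Fin.last n) * boolVec (Fin.snoc s true) (Fin.last n)) +
           q (Fin.snoc s false) * (boolVec (Fin.snoc s false) (Fin.last n) * boolVec (Fin.snoc s false) (Fin.last n)))
          = ∑ s : Fin n → Bool, q (Fin.snoc s true) := by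
        refine Finset.sum_congr rfl fun s _ => ?_
        simp [boolVec_snoc_last]
      rw [h2] at this
      exact this.symm
    · ext a b
      rw [conx_apply]
      have := key a.castSucc b.castSucc
      rw [Lmap_cc] at this
      rw [sum_snoc (fun t => q t * (boolVec t a.castSucc * boolVec t b.castSucc))] at this
      have h2 : ∑ s : Fin n → Bool,
          (q (Fin.snoc s true) * (boolVec (Fin.snoc s true) a.castSucc * boolVec (Fin.snoc s true) b.castSucc) +
           q (Fin.snoc s false) * (boolVec (Fin.snoc s false) a.castSucc * boolVec (Fin.snoc s false) b.castSucc))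
          = ∑ s : Fin n → Bool, q (Fin.snoc s true) * (boolVec s a * boolVec s b) := by
        refine Finset.sum_congr rfl fun s _ => ?_
        have hz : q (Fin.snoc s false) * boolVec (Fin.snoc s false) a.castSucc = 0 :=
          hvanish a _ (by simp)
        rw [boolVec_snoc_castSucc, boolVec_snoc_castSucc]
        rw [show q (Fin.snoc s false) * (boolVec (Fin.snoc s false) a.castSucc * boolVec (Fin.snoc s false) b.castSucc)
            = (q (Fin.snoc s false) * boolVec (Fin.snoc s false) a.castSucc) * boolVec (Fin.snoc s false) b.castSucc by ring,
           hz, zero_mul, add_zero]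
      rw [h2] at this
      exact this

/-- `Z ∈ COR(n)` if and only if `𝓛(Z) ∈ CONX(n+1)`. -/
theorem memCOR_iff_Lmap_memCONX {n : ℕ} (Z : Matrix (Fin n) (Fin n) ℝ) (hZ : Z.IsSymm) :
    memCOR Z ↔ memCONX (Lmap Z) :=
  memCOR_iff_Lmap_memCONX' Z hZ
end

section
/- Let Γ be a real symmetric n×n matrix and let 𝓛'(Γ) be the (n+1)×(n+1) matrix (indexed by 0,…,n) with 𝓛'(Γ)_{00} = 1, 𝓛'(Γ)_{0i} = 𝓛'(Γ)_{i0} = Γ_{ii} for 1 ≤ i ≤ n, and lower-right n×n block equal to Γ. Then Γ belongs to the correlation polytope COR(n) if and only if 𝓛'(Γ) belongs to the normalized correlation polytope nCOR(n+1), the convex hull of {x xᵀ : x ∈ {0,1}^{n+1}, x ≠ 0}. -/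
open Matrix BigOperators

/-- Membership in the normalized correlation polytope `nCOR(n)`: the convex hull of
`{x xᵀ : x ∈ {0,1}^n, x ≠ 0}` (no weight on the zero vector). -/
def memNCOR {n : ℕ} (Γ : Matrix (Fin n) (Fin n) ℝ) : Prop :=
  ∃ p : (Fin n → Bool) → ℝ, (∀ s, 0 ≤ p s) ∧ p (fun _ => false) = 0 ∧
    (∑ s : Fin n → Bool, p s) = 1 ∧
    Γ = ∑ s : Fin n → Bool, p s • rankOne (boolVec s)

/-- The bordering map `𝓛'`: index `0` is the new coordinate, with `𝓛'(Γ)₀₀ = 1`,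
`𝓛'(Γ)₀ᵢ = 𝓛'(Γ)ᵢ₀ = Γᵢᵢ`, and lower-right `n×n` block `Γ`. -/
def Lmap' {n : ℕ} (Γ : Matrix (Fin n) (Fin n) ℝ) : Matrix (Fin (n+1)) (Fin (n+1)) ℝ :=
  Matrix.of fun i j =>
    Fin.cases (Fin.cases (1 : ℝ) (fun j' => Γ j' j') j)
      (fun i' => Fin.cases (Γ i' i') (fun j' => Γ i' j') j) i

lemma sum_bool_split {n : ℕ} (f : (Fin (n+1) → Bool) → ℝ) :
    ∑ t, f t = (∑ s : Fin n → Bool, f (Fin.cons true s)) +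
      ∑ s : Fin n → Bool, f (Fin.cons false s) := by
  rw [← (Fin.consEquiv fun _ => Bool).sum_comp]
  rw [Fintype.sum_prod_type, Fintype.sum_bool]
  rfl

lemma entry_sum {n : ℕ} (p : (Fin n → Bool) → ℝ) (i j : Fin n) :
    (∑ s : Fin n → Bool, p s • rankOne (boolVec s)) i j
      = ∑ s : Fin n → Bool, p s * (boolVec s i * boolVec s j) := by
  simp [Matrix.sum_apply, rankOne, smul_eq_mul]

/-- `Γ ∈ COR(n)` if and only if `𝓛'(Γ) ∈ nCOR(n+1)`. -/
theorem memCOR_iff_Lmap'_memNCOR {n : ℕ} (Γ : Matrix (Fin n) (Fin n) ℝ)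
    (hΓ : Γ.IsSymm) :
    memCOR Γ ↔ memNCOR (Lmap' Γ) := by
  constructor
  · rintro ⟨p, hp0, hp1, hpΓ⟩
    refine ⟨fun t => if t 0 then p (fun i => t i.succ) else 0, ?_, ?_, ?_, ?_⟩
    · intro t; dsimp only; split
      · exact hp0 _
      · exact le_rfl
    · simp
    · rw [sum_bool_split]
      simp only [Fin.cons_zero, if_true, if_false, Finset.sum_const_zero, add_zero]
      simpa using hp1
    · ext i j
      rw [entry_sum, sum_bool_split]
      simp only [Fin.cons_zero, Bool.false_eq_true, if_true, if_false, zero_mul,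
        Finset.sum_const_zero, add_zero]
      have hx : ∀ (s : Fin n → Bool) (i : Fin (n+1)),
          boolVec (Fin.cons true s) i = Fin.cases (1 : ℝ) (boolVec s) i := by
        intro s i
        refine Fin.cases ?_ (fun i' => ?_) i <;> simp [boolVec]
      simp only [hx, Fin.cons_succ]
      refine Fin.cases ?_ (fun i' => ?_) i <;> refine Fin.cases ?_ (fun j' => ?_) j
      · simp [Lmap', hp1]
      · have := congrFun (congrFun hpΓ j') j'
        rw [entry_sum] at this
        simp only [Lmap', Matrix.of_apply, Fin.cases_zero, Fin.cases_succ, this]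
        congr 1; funext s; rw [boolVec_sq]; ring
      · have := congrFun (congrFun hpΓ i') i'
        rw [entry_sum] at this
        simp only [Lmap', Matrix.of_apply, Fin.cases_zero, Fin.cases_succ, this]
        congr 1; funext s; rw [boolVec_sq]; ring
      · have := congrFun (congrFun hpΓ i') j'
        rw [entry_sum] at this
        simp [Lmap', this]
  · rintro ⟨q, hq0, hqz, hq1, hqΓ⟩
    -- first: weights on vectors with first coordinate false vanish
    have h00 : (1 : ℝ) = ∑ t : Fin (n+1) → Bool, q t * (boolVec t 0 * boolVec t 0) := by
      have := congrFun (congrFun hqΓ 0) 0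
      rw [entry_sum] at this
      simpa [Lmap'] using this
    have hsplit1 := sum_bool_split q
    rw [sum_bool_split (fun t => q t * (boolVec t 0 * boolVec t 0))] at h00
    simp only [boolVec, Fin.cons_zero] at h00
    norm_num at h00
    -- h00 : ∑ s, q (Fin.cons true s) = 1 (possibly flipped)
    have h00' : ∑ s : Fin n → Bool, q (Fin.cons true s) = 1 := by linarith
    have hz : ∑ s : Fin n → Bool, q (Fin.cons false s) = 0 := by
      rw [hq1] at hsplit1; linarith
    have hfalse : ∀ s : Fin n → Bool, q (Fin.cons false s) = 0 := by
      intro s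
      have := (Finset.sum_eq_zero_iff_of_nonneg (fun s _ => hq0 (Fin.cons false s))).mp hz
      exact this s (Finset.mem_univ s)
    refine ⟨fun s => q (Fin.cons true s), fun s => hq0 _, ?_, ?_⟩
    · simpa using h00'
    · ext i j
      have := congrFun (congrFun hqΓ i.succ) j.succ
      rw [entry_sum] at this
      have hL : Lmap' Γ i.succ j.succ = Γ i j := by simp [Lmap']
      rw [hL] at this
      rw [entry_sum, this, sum_bool_split]
      have hx : ∀ (b : Bool) (s : Fin n → Bool) (k : Fin n),
          boolVec (Fin.cons b s) k.succ = boolVec s k := by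
        intro b s k; simp [boolVec]
      simp only [hx, hfalse, zero_mul, Finset.sum_const_zero, add_zero]
end

section
/- Let G = (V,E) be a graph with V = {1,…,n−1} (n ≥ 2), let t > 0 be real, and define the n×n matrix Γ by: Γ_{ij} = 1/n² if {i,j} ∈ E and Γ_{ij} = 0 if i ≠ j, i,j < n and {i,j} ∉ E; Γ_{ii} = 1/n for i < n; Γ_{in} = Γ_{ni} = 1/n² for i < n; and Γ_{nn} = t/n². Let ρ = (3n² − n + 4t)/(2n²). If there exist a finite set 𝒞 of cliques of G and weights w_C ≥ 0 with Σ_{C ∈ 𝒞} w_C ≤ t and Σ_{C ∈ 𝒞, v ∈ C} w_C = 1 for every v ∈ V, then there exists a nonnegative function p : {0,1}^n → ℝ≥0 with Γ = Σ_{x ∈ {0,1}^n} p(x)·x xᵀ and Σ_x p(x) ≤ ρ. -/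
/-!
Write `N = m + 1` and `R(S)` for the rank-one matrix of the indicator vector of `S`.
Lifting every clique `C` of the cover to `C ∪ {N}` with weight `w C / N²`, and adding `R({N})`
with the slack weight `(t - ∑ w) / N²`, reproduces the last row and column of `Γ` exactly
(because every vertex is covered with total weight `1`) at cost `t / N²`. The remainder is
supported on the vertex block, has diagonal `m / N²` and off-diagonal entries in `[0, 1/N²]`
(zero on non-edges, since the cover uses cliques), so it is diagonally dominant. A symmetric,
diagonally dominant matrix with nonnegative entries is a nonnegative combination of
`R({i, j})` and `R({i})` of total weight at most its trace, here `m² / N²`; and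
`(t + m²) / N² ≤ ρ`.
-/

open Matrix BigOperators

open scoped Classical in
/-- The `n×n` matrix (with `n = m+1`, vertices of `G` being the indices `< m`) of the
reduction from Fractional Clique Cover: `Γᵢⱼ = 1/n²` on edges (and `0` on non-edges),
`Γᵢᵢ = 1/n` for `i < m`, `Γᵢₙ = Γₙᵢ = 1/n²`, and `Γₙₙ = t/n²`. -/
noncomputable def gammaFCC (m : ℕ) (G : SimpleGraph (Fin m)) (t : ℝ) :
    Matrix (Fin (m+1)) (Fin (m+1)) ℝ :=
  Matrix.of fun i j =>
    if hi : (i : ℕ) < m then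
      if hj : (j : ℕ) < m then
        if i = j then 1 / ((m : ℝ) + 1)
        else if G.Adj ⟨(i : ℕ), hi⟩ ⟨(j : ℕ), hj⟩ then 1 / ((m : ℝ) + 1) ^ 2 else 0
      else 1 / ((m : ℝ) + 1) ^ 2
    else if (j : ℕ) < m then 1 / ((m : ℝ) + 1) ^ 2 else t / ((m : ℝ) + 1) ^ 2

def RelaxedRankLE {n : ℕ} (M : Matrix (Fin n) (Fin n) ℝ) (r : ℝ) : Prop :=
  ∃ p : (Fin n → Bool) → ℝ, (∀ s, 0 ≤ p s) ∧
    M = ∑ s : Fin n → Bool, p s • rankOne (boolVec s) ∧ ∑ s : Fin n → Bool, p s ≤ r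

namespace RelaxedRankLE

variable {n : ℕ} {M M' : Matrix (Fin n) (Fin n) ℝ} {r r' : ℝ}

theorem zero : RelaxedRankLE (0 : Matrix (Fin n) (Fin n) ℝ) 0 :=
  ⟨0, fun _ => le_rfl, by simp, by simp⟩

theorem mono (h : RelaxedRankLE M r) (hr : r ≤ r') : RelaxedRankLE M r' :=
  let ⟨p, hp, hM, hsum⟩ := h
  ⟨p, hp, hM, hsum.trans hr⟩

theorem add (h : RelaxedRankLE M r) (h' : RelaxedRankLE M' r') :
    RelaxedRankLE (M + M') (r + r') := by
  obtain ⟨p, hp, rfl, hsum⟩ := h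
  obtain ⟨p', hp', rfl, hsum'⟩ := h'
  refine ⟨p + p', fun s => add_nonneg (hp s) (hp' s), ?_, ?_⟩
  · simp only [Pi.add_apply, add_smul, Finset.sum_add_distrib]
  · simpa only [Pi.add_apply, Finset.sum_add_distrib] using add_le_add hsum hsum'

theorem sum {ι : Type*} {s : Finset ι} {M : ι → Matrix (Fin n) (Fin n) ℝ} {r : ι → ℝ}
    (h : ∀ k ∈ s, RelaxedRankLE (M k) (r k)) :
    RelaxedRankLE (∑ k ∈ s, M k) (∑ k ∈ s, r k) := by
  induction s using Finset.cons_induction with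
  | empty => exact zero
  | cons k s hk ih =>
    rw [Finset.sum_cons, Finset.sum_cons]
    exact (h k (Finset.mem_cons_self k s)).add
      (ih fun j hj => h j (Finset.mem_cons_of_mem hj))

end RelaxedRankLE

theorem relaxedRankLE_smul_rankOne {n : ℕ} {c : ℝ} (hc : 0 ≤ c) (s : Fin n → Bool) :
    RelaxedRankLE (c • rankOne (boolVec s)) c := by
  classical
  refine ⟨Pi.single s c, fun s' => ?_, ?_, by simp⟩
  · by_cases h : s' = s <;> simp [h, hc]
  · simp [Pi.single_apply, ite_smul]

section BooleanRankOne

open Finset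

theorem rankOne_boolVec_apply {n : ℕ} (S : Finset (Fin n)) (i j : Fin n) :
    rankOne (boolVec (· ∈ S)) i j = if i ∈ S ∧ j ∈ S then 1 else 0 := by
  simp only [rankOne, boolVec, of_apply, decide_eq_true_eq]
  split_ifs <;> simp_all

theorem sum_smul_rankOne_boolVec_apply {n : ℕ} {ι : Type*} (s : Finset ι)
    (c : ι → ℝ) (S : ι → Finset (Fin n)) (i j : Fin n) :
    (∑ k ∈ s, c k • rankOne (boolVec (· ∈ S k))) i j = ∑ k ∈ s with i ∈ S k ∧ j ∈ S k, c k := by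
  simp [Matrix.sum_apply, rankOne_boolVec_apply, sum_filter]

theorem sum_smul_rankOne_boolVec_pair_apply {n : ℕ} (c : Fin n → Fin n → ℝ)
    (hc : ∀ k l, c k l = c l k) (hdiag : ∀ k, c k k = 0) (i j : Fin n) :
    (∑ kl : Fin n × Fin n, c kl.1 kl.2 • rankOne (boolVec (· ∈ ({kl.1, kl.2} : Finset _)))) i j
      = if i = j then 2 * ∑ l, c i l else 2 * c i j := by
  rw [sum_smul_rankOne_boolVec_apply, sum_filter]
  split_ifs with hij
  · subst hij
    have hpt : ∀ k l, (if i ∈ ({k, l} : Finset _) ∧ i ∈ ({k, l} : Finset _) then c k l else 0)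
        = (if k = i then c k l else 0) + (if l = i then c k l else 0) := by
      intro k l
      by_cases hk : k = i <;> by_cases hl : l = i <;> simp_all [eq_comm]
    simp only [hpt, sum_add_distrib, Fintype.sum_prod_type, sum_ite_eq', mem_univ, if_true]
    rw [sum_comm]
    simp [hc _ i, two_mul]
  · have hpt : ∀ kl : Fin n × Fin n,
        (if i ∈ ({kl.1, kl.2} : Finset _) ∧ j ∈ ({kl.1, kl.2} : Finset _) then c kl.1 kl.2 else 0)
        = (if kl = (i, j) then c kl.1 kl.2 else 0) + (if kl = (j, i) then c kl.1 kl.2 else 0) := by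
      rintro ⟨k, l⟩
      by_cases hk : k = i <;> by_cases hl : l = j <;> simp_all [eq_comm, and_comm]
    simp only [hpt, sum_add_distrib, Fintype.sum_ite_eq', hc j i, two_mul]

theorem sum_smul_rankOne_boolVec_singleton_apply {n : ℕ} (d : Fin n → ℝ) (i j : Fin n) :
    (∑ k, d k • rankOne (boolVec (· ∈ ({k} : Finset _)))) i j = if i = j then d i else 0 := by
  rw [sum_smul_rankOne_boolVec_apply, sum_filter]
  split_ifs with hij
  · subst hij; simp
  · exact sum_eq_zero fun k _ => if_neg fun h => hij (by simp_all)

theorem relaxedRankLE_trace_of_diagDominant {n : ℕ} {B : Matrix (Fin n) (Fin n) ℝ}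
    (hB : B.IsSymm) (hoff : ∀ i j, i ≠ j → 0 ≤ B i j)
    (hdom : ∀ i, ∑ j ∈ univ.erase i, B i j ≤ B i i) : RelaxedRankLE B B.trace := by
  set O : Fin n → Fin n → ℝ := fun k l => if k = l then 0 else B k l
  have hO : ∀ k l, 0 ≤ O k l := fun k l => by
    simp only [O]
    split_ifs with h
    exacts [le_rfl, hoff k l h]
  have hrow : ∀ i, ∑ l, O i l = ∑ l ∈ univ.erase i, B i l := fun i => by
    simp [O, sum_ite, filter_ne]
  have hdecomp : B = ∑ kl : Fin n × Fin n,
      (O kl.1 kl.2 / 2) • rankOne (boolVec (· ∈ ({kl.1, kl.2} : Finset _)))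
      + ∑ k, (B k k - ∑ l, O k l) • rankOne (boolVec (· ∈ ({k} : Finset _))) := by
    ext i j
    have hsymm : ∀ k l, O k l / 2 = O l k / 2 := fun k l => by
      simp only [O, hB.apply l k, eq_comm]
    rw [Matrix.add_apply,
      sum_smul_rankOne_boolVec_pair_apply (fun k l => O k l / 2) hsymm (by simp [O]),
      sum_smul_rankOne_boolVec_singleton_apply]
    split_ifs with hij
    · subst hij; rw [← sum_div]; ring
    · simp only [O, if_neg hij, add_zero]; ring
  nth_rewrite 1 [hdecomp]
  refine ((RelaxedRankLE.sum fun kl _ =>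
      relaxedRankLE_smul_rankOne (div_nonneg (hO kl.1 kl.2) zero_le_two) _).add
    (RelaxedRankLE.sum fun k _ =>
      relaxedRankLE_smul_rankOne (sub_nonneg.2 ((hrow k).trans_le (hdom k))) _)).mono ?_
  have hS : 0 ≤ ∑ k, ∑ l, O k l := sum_nonneg fun k _ => sum_nonneg fun l _ => hO k l
  have hhalf : ∑ kl : Fin n × Fin n, O kl.1 kl.2 / 2 = (∑ k, ∑ l, O k l) / 2 := by
    simp only [Fintype.sum_prod_type, sum_div]
  rw [hhalf, sum_sub_distrib, Matrix.trace]
  simp only [Matrix.diag]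
  linarith

end BooleanRankOne

section FractionalCliqueCover

open Finset

variable {m : ℕ}

def cone (C : Finset (Fin m)) : Finset (Fin (m + 1)) :=
  insert (Fin.last m) (C.map Fin.castSuccEmb)

@[simp] theorem castSucc_mem_cone {C : Finset (Fin m)} {i : Fin m} :
    i.castSucc ∈ cone C ↔ i ∈ C := by
  simp [cone, Fin.castSucc_ne_last]

@[simp] theorem last_mem_cone (C : Finset (Fin m)) : Fin.last m ∈ cone C :=
  mem_insert_self _ _

theorem gammaFCC_isSymm (G : SimpleGraph (Fin m)) (t : ℝ) : (gammaFCC m G t).IsSymm := by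
  refine Matrix.IsSymm.ext fun i j => ?_
  simp only [gammaFCC, of_apply]
  split_ifs <;> first | rfl | omega | exact absurd (G.adj_symm ‹_›) ‹_›

open scoped Classical in
theorem gammaFCC_castSucc_castSucc (G : SimpleGraph (Fin m)) (t : ℝ) (i j : Fin m) :
    gammaFCC m G t i.castSucc j.castSucc
      = if i = j then 1 / ((m : ℝ) + 1)
        else if G.Adj i j then 1 / ((m : ℝ) + 1) ^ 2 else 0 := by
  simp [gammaFCC, Fin.castSucc_inj]

theorem gammaFCC_castSucc_last (G : SimpleGraph (Fin m)) (t : ℝ) (i : Fin m) :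
    gammaFCC m G t i.castSucc (Fin.last m) = 1 / ((m : ℝ) + 1) ^ 2 := by
  simp [gammaFCC]

theorem gammaFCC_last_last (G : SimpleGraph (Fin m)) (t : ℝ) :
    gammaFCC m G t (Fin.last m) (Fin.last m) = t / ((m : ℝ) + 1) ^ 2 := by
  simp [gammaFCC]

noncomputable def coneMatrix (𝒞 : Finset (Finset (Fin m))) (w : Finset (Fin m) → ℝ) (t : ℝ) :
    Matrix (Fin (m + 1)) (Fin (m + 1)) ℝ :=
  ∑ C ∈ 𝒞, (w C / ((m : ℝ) + 1) ^ 2) • rankOne (boolVec (· ∈ cone C))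
    + ((t - ∑ C ∈ 𝒞, w C) / ((m : ℝ) + 1) ^ 2) • rankOne (boolVec (· ∈ cone ∅))

variable {𝒞 : Finset (Finset (Fin m))} {w : Finset (Fin m) → ℝ} {t : ℝ}

theorem relaxedRankLE_coneMatrix (hw : ∀ C, 0 ≤ w C) (hwt : ∑ C ∈ 𝒞, w C ≤ t) :
    RelaxedRankLE (coneMatrix 𝒞 w t) (t / ((m : ℝ) + 1) ^ 2) := by
  refine ((RelaxedRankLE.sum fun C _ =>
      relaxedRankLE_smul_rankOne (div_nonneg (hw C) (sq_nonneg _)) _).add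
    (relaxedRankLE_smul_rankOne (div_nonneg (sub_nonneg.2 hwt) (sq_nonneg _)) _)).mono ?_
  rw [← sum_div, ← add_div, add_sub_cancel]

theorem coneMatrix_isSymm : (coneMatrix 𝒞 w t).IsSymm :=
  Matrix.IsSymm.ext fun i j => by
    simp only [coneMatrix, Matrix.add_apply, Matrix.sum_apply, Matrix.smul_apply,
      rankOne_boolVec_apply, and_comm]

theorem coneMatrix_castSucc_castSucc (i j : Fin m) :
    coneMatrix 𝒞 w t i.castSucc j.castSucc
      = (∑ C ∈ 𝒞 with i ∈ C ∧ j ∈ C, w C) / ((m : ℝ) + 1) ^ 2 := by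
  rw [coneMatrix, Matrix.add_apply, sum_smul_rankOne_boolVec_apply, Matrix.smul_apply,
    rankOne_boolVec_apply]
  simp [sum_div]

theorem coneMatrix_castSucc_last (i : Fin m) :
    coneMatrix 𝒞 w t i.castSucc (Fin.last m)
      = (∑ C ∈ 𝒞 with i ∈ C, w C) / ((m : ℝ) + 1) ^ 2 := by
  rw [coneMatrix, Matrix.add_apply, sum_smul_rankOne_boolVec_apply, Matrix.smul_apply,
    rankOne_boolVec_apply]
  simp [sum_div]

theorem coneMatrix_last_last :
    coneMatrix 𝒞 w t (Fin.last m) (Fin.last m) = t / ((m : ℝ) + 1) ^ 2 := by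
  rw [coneMatrix, Matrix.add_apply, sum_smul_rankOne_boolVec_apply, Matrix.smul_apply,
    rankOne_boolVec_apply]
  simp only [last_mem_cone, and_self, filter_true, ↓reduceIte, smul_eq_mul, mul_one]
  rw [← sum_div, ← add_div, add_sub_cancel]

variable {G : SimpleGraph (Fin m)}

theorem gammaFCC_sub_coneMatrix_castSucc_self
    (hcov : ∀ v : Fin m, ∑ C ∈ 𝒞 with v ∈ C, w C = 1) (i : Fin m) :
    (gammaFCC m G t - coneMatrix 𝒞 w t) i.castSucc i.castSucc = m / ((m : ℝ) + 1) ^ 2 := by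
  classical
  rw [Matrix.sub_apply, gammaFCC_castSucc_castSucc, coneMatrix_castSucc_castSucc, if_pos rfl]
  simp only [and_self, hcov]
  field_simp
  ring

theorem gammaFCC_sub_coneMatrix_castSucc_castSucc_mem_Icc
    (hclique : ∀ C ∈ 𝒞, ∀ i ∈ C, ∀ j ∈ C, i ≠ j → G.Adj i j) (hw : ∀ C, 0 ≤ w C)
    (hcov : ∀ v : Fin m, ∑ C ∈ 𝒞 with v ∈ C, w C = 1) {i j : Fin m} (hij : i ≠ j) :
    (gammaFCC m G t - coneMatrix 𝒞 w t) i.castSucc j.castSucc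
      ∈ Set.Icc 0 (1 / ((m : ℝ) + 1) ^ 2) := by
  classical
  rw [Matrix.sub_apply, gammaFCC_castSucc_castSucc, coneMatrix_castSucc_castSucc, if_neg hij]
  set a := ∑ C ∈ 𝒞 with i ∈ C ∧ j ∈ C, w C
  have ha0 : 0 ≤ a := sum_nonneg fun C _ => hw C
  have ha1 : a ≤ 1 := hcov i ▸ sum_le_sum_of_subset_of_nonneg
    (monotone_filter_right _ fun _ _ h => h.1) fun C _ _ => hw C
  split_ifs with hadj
  · rw [← sub_div]
    exact ⟨div_nonneg (by linarith) (by positivity), by gcongr; linarith⟩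
  · have ha : a = 0 := sum_eq_zero fun C hC => by
      obtain ⟨hC, hi, hj⟩ := mem_filter.1 hC
      exact absurd (hclique C hC i hi j hj hij) hadj
    rw [ha, zero_div, sub_zero, Set.left_mem_Icc]
    positivity

theorem gammaFCC_sub_coneMatrix_castSucc_last
    (hcov : ∀ v : Fin m, ∑ C ∈ 𝒞 with v ∈ C, w C = 1) (i : Fin m) :
    (gammaFCC m G t - coneMatrix 𝒞 w t) i.castSucc (Fin.last m) = 0 := by
  rw [Matrix.sub_apply, gammaFCC_castSucc_last, coneMatrix_castSucc_last, hcov, sub_self]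

theorem gammaFCC_sub_coneMatrix_last
    (hcov : ∀ v : Fin m, ∑ C ∈ 𝒞 with v ∈ C, w C = 1) (y : Fin (m + 1)) :
    (gammaFCC m G t - coneMatrix 𝒞 w t) (Fin.last m) y = 0 := by
  induction y using Fin.lastCases with
  | last => rw [Matrix.sub_apply, gammaFCC_last_last, coneMatrix_last_last, sub_self]
  | cast j =>
    rw [((gammaFCC_isSymm G t).sub coneMatrix_isSymm).apply,
      gammaFCC_sub_coneMatrix_castSucc_last hcov]

theorem gammaFCC_sub_coneMatrix_mem_Icc
    (hclique : ∀ C ∈ 𝒞, ∀ i ∈ C, ∀ j ∈ C, i ≠ j → G.Adj i j) (hw : ∀ C, 0 ≤ w C)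
    (hcov : ∀ v : Fin m, ∑ C ∈ 𝒞 with v ∈ C, w C = 1) {x y : Fin (m + 1)} (hxy : x ≠ y) :
    (gammaFCC m G t - coneMatrix 𝒞 w t) x y ∈ Set.Icc 0 (1 / ((m : ℝ) + 1) ^ 2) := by
  induction x using Fin.lastCases with
  | last =>
    rw [gammaFCC_sub_coneMatrix_last hcov]
    exact Set.left_mem_Icc.2 (by positivity)
  | cast i =>
    induction y using Fin.lastCases with
    | last =>
      rw [gammaFCC_sub_coneMatrix_castSucc_last hcov]
      exact Set.left_mem_Icc.2 (by positivity)
    | cast j =>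
      exact gammaFCC_sub_coneMatrix_castSucc_castSucc_mem_Icc hclique hw hcov
        fun h => hxy (h ▸ rfl)

theorem trace_gammaFCC_sub_coneMatrix (hcov : ∀ v : Fin m, ∑ C ∈ 𝒞 with v ∈ C, w C = 1) :
    (gammaFCC m G t - coneMatrix 𝒞 w t).trace = (m : ℝ) ^ 2 / ((m : ℝ) + 1) ^ 2 := by
  rw [Matrix.trace, Fin.sum_univ_castSucc]
  simp only [Matrix.diag_apply, gammaFCC_sub_coneMatrix_castSucc_self hcov,
    gammaFCC_sub_coneMatrix_last hcov]
  simp only [sum_const, card_univ, Fintype.card_fin, nsmul_eq_mul, add_zero]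
  ring

theorem relaxedRankLE_gammaFCC_sub_coneMatrix
    (hclique : ∀ C ∈ 𝒞, ∀ i ∈ C, ∀ j ∈ C, i ≠ j → G.Adj i j) (hw : ∀ C, 0 ≤ w C)
    (hcov : ∀ v : Fin m, ∑ C ∈ 𝒞 with v ∈ C, w C = 1) :
    RelaxedRankLE (gammaFCC m G t - coneMatrix 𝒞 w t) ((m : ℝ) ^ 2 / ((m : ℝ) + 1) ^ 2) := by
  rw [← trace_gammaFCC_sub_coneMatrix hcov]
  refine relaxedRankLE_trace_of_diagDominant ((gammaFCC_isSymm G t).sub coneMatrix_isSymm)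
    (fun x y h => (gammaFCC_sub_coneMatrix_mem_Icc hclique hw hcov h).1) fun x => ?_
  induction x using Fin.lastCases with
  | last => simp [gammaFCC_sub_coneMatrix_last hcov]
  | cast i =>
    calc ∑ y ∈ univ.erase i.castSucc, (gammaFCC m G t - coneMatrix 𝒞 w t) i.castSucc y
        ≤ ∑ y ∈ univ.erase i.castSucc, 1 / ((m : ℝ) + 1) ^ 2 := sum_le_sum fun y hy =>
          (gammaFCC_sub_coneMatrix_mem_Icc hclique hw hcov (ne_of_mem_erase hy).symm).2
      _ = (gammaFCC m G t - coneMatrix 𝒞 w t) i.castSucc i.castSucc := by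
          rw [gammaFCC_sub_coneMatrix_castSucc_self hcov]
          simp only [sum_const, card_erase_of_mem (mem_univ _), card_univ, Fintype.card_fin,
            add_tsub_cancel_right, nsmul_eq_mul]
          ring

end FractionalCliqueCover

theorem gammaFCC_relaxedRank_of_fractionalCliqueCover_general (m : ℕ)
    (G : SimpleGraph (Fin m)) (t : ℝ) (ht : 0 < t)
    (𝒞 : Finset (Finset (Fin m))) (w : Finset (Fin m) → ℝ)
    (hclique : ∀ C ∈ 𝒞, ∀ i ∈ C, ∀ j ∈ C, i ≠ j → G.Adj i j)
    (hw : ∀ C, 0 ≤ w C)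
    (hwt : (∑ C ∈ 𝒞, w C) ≤ t)
    (hcov : ∀ v : Fin m, (∑ C ∈ 𝒞.filter (fun C => v ∈ C), w C) = 1) :
    ∃ p : (Fin (m+1) → Bool) → ℝ, (∀ s, 0 ≤ p s) ∧
      gammaFCC m G t = ∑ s : Fin (m+1) → Bool, p s • rankOne (boolVec s) ∧
      (∑ s : Fin (m+1) → Bool, p s)
        ≤ (3 * ((m : ℝ) + 1) ^ 2 - ((m : ℝ) + 1) + 4 * t) / (2 * ((m : ℝ) + 1) ^ 2) := by
  have h := (relaxedRankLE_coneMatrix hw hwt).add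
    (relaxedRankLE_gammaFCC_sub_coneMatrix (G := G) (t := t) hclique hw hcov)
  rw [add_sub_cancel] at h
  refine h.mono ?_
  rw [← add_div, div_le_div_iff₀ (by positivity) (by positivity)]
  nlinarith

/-- If `G` admits a fractional clique cover of value at most `t`, then `Γ` has a conic
decomposition into rank-one boolean matrices of total weight at most
`ρ = (3n² − n + 4t)/(2n²)` (here `n = m+1`). -/
theorem gammaFCC_relaxedRank_of_fractionalCliqueCover (m : ℕ) (hm : 1 ≤ m)
    (G : SimpleGraph (Fin m)) (t : ℝ) (ht : 0 < t)
    (𝒞 : Finset (Finset (Fin m))) (w : Finset (Fin m) → ℝ)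
    (hclique : ∀ C ∈ 𝒞, ∀ i ∈ C, ∀ j ∈ C, i ≠ j → G.Adj i j)
    (hw : ∀ C, 0 ≤ w C)
    (hwt : (∑ C ∈ 𝒞, w C) ≤ t)
    (hcov : ∀ v : Fin m, (∑ C ∈ 𝒞.filter (fun C => v ∈ C), w C) = 1) :
    ∃ p : (Fin (m+1) → Bool) → ℝ, (∀ s, 0 ≤ p s) ∧
      gammaFCC m G t = ∑ s : Fin (m+1) → Bool, p s • rankOne (boolVec s) ∧
      (∑ s : Fin (m+1) → Bool, p s)
        ≤ (3 * ((m : ℝ) + 1) ^ 2 - ((m : ℝ) + 1) + 4 * t) / (2 * ((m : ℝ) + 1) ^ 2) :=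
  gammaFCC_relaxedRank_of_fractionalCliqueCover_general m G t ht 𝒞 w hclique hw hwt hcov
end

section
/- Let G = (V,E) be a graph with V = {1,…,n−1} (n ≥ 2), let t > 0 be real, and define the n×n matrix Γ by: Γ_{ij} = 1/n² if {i,j} ∈ E and Γ_{ij} = 0 if i ≠ j, i,j < n and {i,j} ∉ E; Γ_{ii} = 1/n for i < n; Γ_{in} = Γ_{ni} = 1/n² for i < n; and Γ_{nn} = t/n². If there exists a nonnegative function p : {0,1}^n → ℝ≥0 with Γ = Σ_{x ∈ {0,1}^n} p(x)·x xᵀ, then there exist a finite set 𝒞 of cliques of G and weights w_C ≥ 0 with Σ_{C ∈ 𝒞} w_C ≤ t and Σ_{C ∈ 𝒞, v ∈ C} w_C = 1 for every v ∈ V. -/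
open Matrix BigOperators

/-- If `Γ` has a conic decomposition into rank-one boolean matrices, then `G` admits a
fractional clique cover of value at most `t`. -/
theorem fractionalCliqueCover_of_gammaFCC_mem (m : ℕ) (hm : 1 ≤ m)
    (G : SimpleGraph (Fin m)) (t : ℝ) (ht : 0 < t)
    (p : (Fin (m+1) → Bool) → ℝ) (hp : ∀ s, 0 ≤ p s)
    (hΓ : gammaFCC m G t = ∑ s : Fin (m+1) → Bool, p s • rankOne (boolVec s)) :
    ∃ (𝒞 : Finset (Finset (Fin m))) (w : Finset (Fin m) → ℝ),
      (∀ C ∈ 𝒞, ∀ i ∈ C, ∀ j ∈ C, i ≠ j → G.Adj i j) ∧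
      (∀ C, 0 ≤ w C) ∧
      (∑ C ∈ 𝒞, w C) ≤ t ∧
      (∀ v : Fin m, (∑ C ∈ 𝒞.filter (fun C => v ∈ C), w C) = 1) := by
  classical
  set n : ℝ := (m : ℝ) + 1 with hn
  have hn0 : (0:ℝ) < n := by positivity
  have hn2 : (0:ℝ) < n ^ 2 := by positivity
  -- the vertex set determined by a boolean vector
  set Cs : (Fin (m+1) → Bool) → Finset (Fin m) :=
    fun s => Finset.univ.filter (fun i => s i.castSucc = true) with hCs
  have entry : ∀ i j : Fin (m+1),
      gammaFCC m G t i j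
        = ∑ s : Fin (m+1) → Bool, if s i = true ∧ s j = true then p s else 0 := by
    intro i j
    rw [hΓ]
    rw [Matrix.sum_apply]
    refine Finset.sum_congr rfl fun s _ => ?_
    by_cases h1 : s i = true <;> by_cases h2 : s j = true <;>
      simp [rankOne, boolVec, h1, h2]
  have termnn : ∀ (P : Prop) [Decidable P] (s : Fin (m+1) → Bool),
      (0:ℝ) ≤ if P then p s else 0 := by
    intro P _ s
    split
    · exact hp s
    · exact le_refl 0
  have hbad : ∀ (s : Fin (m+1) → Bool) (i j : Fin m), i ≠ j → ¬ G.Adj i j →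
      s i.castSucc = true → s j.castSucc = true → p s = 0 := by
    intro s i j hij hadj hi hj
    have hij' : i.castSucc ≠ j.castSucc := fun h => hij (Fin.castSucc_injective m h)
    have h0 : gammaFCC m G t i.castSucc j.castSucc = 0 := by
      simp only [gammaFCC, Matrix.of_apply, Fin.coe_castSucc, i.is_lt, j.is_lt, dif_pos,
        if_neg hij', Fin.eta]
      rw [if_neg hadj]
    have hsum : (∑ s' : Fin (m+1) → Bool,
        if s' i.castSucc = true ∧ s' j.castSucc = true then p s' else 0) = 0 := by
      rw [← entry]; exact h0
    have hterm := (Finset.sum_eq_zero_iff_of_nonneg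
      (fun s' _ => termnn _ s')).mp hsum s (Finset.mem_univ s)
    rw [if_pos ⟨hi, hj⟩] at hterm
    exact hterm
  set w : Finset (Fin m) → ℝ := fun C =>
    n^2 * ∑ s : Fin (m+1) → Bool, if s (Fin.last m) = true ∧ Cs s = C then p s else 0
    with hw
  set 𝒞 : Finset (Finset (Fin m)) :=
    Finset.univ.filter (fun C => ∀ i ∈ C, ∀ j ∈ C, i ≠ j → G.Adj i j) with h𝒞
  have hsumA : ∀ A : Finset (Finset (Fin m)),
      ∑ C ∈ A, w C = n^2 * ∑ s : Fin (m+1) → Bool,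
        if s (Fin.last m) = true ∧ Cs s ∈ A then p s else 0 := by
    intro A
    simp only [hw]
    rw [← Finset.mul_sum, Finset.sum_comm]
    congr 1
    refine Finset.sum_congr rfl fun s _ => ?_
    by_cases hl : s (Fin.last m) = true
    · simp only [hl, true_and]
      exact Finset.sum_ite_eq A (Cs s) (fun _ => p s)
    · simp [hl]
  have hclique : ∀ C ∈ 𝒞, ∀ i ∈ C, ∀ j ∈ C, i ≠ j → G.Adj i j := by
    intro C hC
    simpa [h𝒞] using (Finset.mem_filter.mp hC).2
  have hwnn : ∀ C, 0 ≤ w C := by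
    intro C
    have : (0:ℝ) ≤ ∑ s : Fin (m+1) → Bool,
        if s (Fin.last m) = true ∧ Cs s = C then p s else 0 :=
      Finset.sum_nonneg fun s _ => termnn _ s
    exact mul_nonneg (le_of_lt hn2) this
  have hlastnot : ¬ ((Fin.last m : Fin (m+1)) : ℕ) < m := by
    simp [Fin.val_last]
  have htot : ∑ C ∈ 𝒞, w C ≤ t := by
    rw [hsumA]
    have h1 : gammaFCC m G t (Fin.last m) (Fin.last m) = t / n^2 := by
      simp only [gammaFCC, Matrix.of_apply, dif_neg hlastnot, if_neg hlastnot, hn]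
    have h2 : (∑ s : Fin (m+1) → Bool,
        if s (Fin.last m) = true ∧ s (Fin.last m) = true then p s else 0) = t / n^2 := by
      rw [← entry]; exact h1
    have hle : (∑ s : Fin (m+1) → Bool,
          if s (Fin.last m) = true ∧ Cs s ∈ 𝒞 then p s else 0)
        ≤ ∑ s : Fin (m+1) → Bool,
          if s (Fin.last m) = true ∧ s (Fin.last m) = true then p s else 0 := by
      refine Finset.sum_le_sum fun s _ => ?_
      by_cases hl : s (Fin.last m) = true <;> by_cases hc : Cs s ∈ 𝒞 <;>
        simp [hl, hc, hp s]
    have := mul_le_mul_of_nonneg_left (hle.trans_eq h2) (le_of_lt hn2)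
    calc n^2 * ∑ s : Fin (m+1) → Bool,
          (if s (Fin.last m) = true ∧ Cs s ∈ 𝒞 then p s else 0)
        ≤ n^2 * (t / n^2) := this
      _ = t := by field_simp
  have hcov : ∀ v : Fin m, ∑ C ∈ 𝒞.filter (fun C => v ∈ C), w C = 1 := by
    intro v
    rw [hsumA]
    have h1 : gammaFCC m G t v.castSucc (Fin.last m) = 1 / n^2 := by
      simp only [gammaFCC, Matrix.of_apply, Fin.coe_castSucc, v.is_lt, dif_pos,
        dif_neg hlastnot, hn]
    have h2 : (∑ s : Fin (m+1) → Bool,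
        if s v.castSucc = true ∧ s (Fin.last m) = true then p s else 0) = 1 / n^2 := by
      rw [← entry]; exact h1
    have h3 : (∑ s : Fin (m+1) → Bool,
        if s (Fin.last m) = true ∧ Cs s ∈ 𝒞.filter (fun C => v ∈ C) then p s else 0)
        = ∑ s : Fin (m+1) → Bool,
          if s v.castSucc = true ∧ s (Fin.last m) = true then p s else 0 := by
      refine Finset.sum_congr rfl fun s _ => ?_
      by_cases hl : s (Fin.last m) = true
      · by_cases hv : s v.castSucc = true
        · by_cases hcl : ∀ i ∈ Cs s, ∀ j ∈ Cs s, i ≠ j → G.Adj i j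
          · have hmem : Cs s ∈ 𝒞.filter (fun C => v ∈ C) := by
              rw [Finset.mem_filter, h𝒞, Finset.mem_filter]
              exact ⟨⟨Finset.mem_univ _, hcl⟩, by simp [hCs, hv]⟩
            simp [hl, hv, hmem]
          · push_neg at hcl
            obtain ⟨i, hi, j, hj, hij, hadj⟩ := hcl
            have hps : p s = 0 := hbad s i j hij hadj
              (by simpa [hCs] using hi) (by simpa [hCs] using hj)
            simp [hps]
        · have hnm : Cs s ∉ 𝒞.filter (fun C => v ∈ C) := by
            rw [Finset.mem_filter]
            rintro ⟨-, hvv⟩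
            rw [hCs] at hvv
            simp only [Finset.mem_filter, Finset.mem_univ, true_and] at hvv
            exact hv hvv
          simp [hv, hnm]
      · simp [hl]
    rw [h3, h2]
    field_simp
  exact ⟨𝒞, w, hclique, hwnn, htot, hcov⟩
end
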